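/- For every i ∈ V, every 3-element set R ⊆ V with i ∈ R, and 2 ≤ k ≤ n, Σ_{|S|=k, (R∩S={i} or R\S={i})} x_S = (1/(k−1)) Σ_{Q∈Ω², Q∩R={i}} y^k_Q + y^k_{R\{i}} − ((k−2)/(k−1)) Σ_{Q∈Ω², i∈Q⊆R} y^k_Q. -/

import Mathlib

open Finset

/-- y^k_Q = Σ_{S ⊆ V, |S|=k, Q⊆S} x_S -/
def yQ (n k : ℕ) (Q : Finset (Fin n)) (x : Finset (Fin n) → ℝ) : ℝ :=
  ∑ S ∈ Finset.univ.filter (fun S : Finset (Fin n) => S.card = k ∧ Q ⊆ S), x S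

lemma yQ_eq (n k : ℕ) (Q : Finset (Fin n)) (x : Finset (Fin n) → ℝ) :
    yQ n k Q x = ∑ S ∈ Finset.univ.filter (fun S : Finset (Fin n) => S.card = k),
      (if Q ⊆ S then (1:ℝ) else 0) * x S := by
  unfold yQ
  rw [← Finset.filter_filter, Finset.sum_filter]
  refine Finset.sum_congr rfl fun S _ => ?_
  split <;> simp

lemma sum_yQ (n k : ℕ) (x : Finset (Fin n) → ℝ) (F : Finset (Finset (Fin n))) :
    ∑ Q ∈ F, yQ n k Q x
      = ∑ S ∈ Finset.univ.filter (fun S : Finset (Fin n) => S.card = k),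
          ((F.filter (· ⊆ S)).card : ℝ) * x S := by
  unfold yQ
  have h : ∀ Q : Finset (Fin n),
      ∑ S ∈ Finset.univ.filter (fun S : Finset (Fin n) => S.card = k ∧ Q ⊆ S), x S
        = ∑ S ∈ Finset.univ.filter (fun S : Finset (Fin n) => S.card = k),
            if Q ⊆ S then x S else 0 := by
    intro Q
    rw [← Finset.filter_filter, Finset.sum_filter]
  simp_rw [h]
  rw [Finset.sum_comm]
  refine Finset.sum_congr rfl fun S _ => ?_
  rw [← Finset.sum_filter, Finset.sum_const, nsmul_eq_mul]

lemma pair_count {n : ℕ} (i : Fin n) (A : Finset (Fin n)) (hiA : i ∉ A) :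
    (Finset.univ.filter
        (fun Q : Finset (Fin n) => Q.card = 2 ∧ i ∈ Q ∧ Q.erase i ⊆ A)).card
      = A.card := by
  have hset : Finset.univ.filter
        (fun Q : Finset (Fin n) => Q.card = 2 ∧ i ∈ Q ∧ Q.erase i ⊆ A)
      = A.image (fun j => ({i, j} : Finset (Fin n))) := by
    ext Q
    simp only [mem_filter, mem_univ, true_and, mem_image]
    constructor
    · rintro ⟨hc, hi, hsub⟩
      have h1 : (Q.erase i).card = 1 := by rw [card_erase_of_mem hi, hc]
      obtain ⟨j, hj⟩ := Finset.card_eq_one.mp h1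
      refine ⟨j, hsub (hj ▸ Finset.mem_singleton_self j), ?_⟩
      have h2 := Finset.insert_erase hi
      rw [hj] at h2
      rw [← h2]
    · rintro ⟨j, hjA, rfl⟩
      have hji : j ≠ i := fun h => hiA (h ▸ hjA)
      refine ⟨?_, Finset.mem_insert_self _ _, ?_⟩
      · rw [show ({i, j} : Finset (Fin n)) = insert i {j} from rfl,
          Finset.card_insert_of_notMem (by simp [Ne.symm hji]), Finset.card_singleton]
      · rw [show ({i, j} : Finset (Fin n)) = insert i {j} from rfl,
          Finset.erase_insert (by simp [Ne.symm hji])]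
        simpa using hjA
  rw [hset, Finset.card_image_of_injOn]
  intro j hj j' hj' h
  have h' : ({i, j} : Finset (Fin n)) = {i, j'} := h
  have hj1 : j ∈ ({i, j'} : Finset (Fin n)) := by
    rw [← h']; exact Finset.mem_insert_of_mem (Finset.mem_singleton_self j)
  rcases Finset.mem_insert.mp hj1 with h1 | h1
  · exact absurd (h1 ▸ hj) hiA
  · exact Finset.mem_singleton.mp h1

lemma coef_eq {n : ℕ} (i : Fin n) (R S : Finset (Fin n)) (hR : R.card = 3) (hiR : i ∈ R)
    (k : ℕ) (hk : 2 ≤ k) (hS : S.card = k) :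
    (if R ∩ S = {i} ∨ R \ S = {i} then (1:ℝ) else 0)
      = 1/((k:ℝ)-1) *
          (((Finset.univ.filter
              (fun Q : Finset (Fin n) => Q.card = 2 ∧ Q ∩ R = {i})).filter
                (· ⊆ S)).card : ℝ)
        + (if R.erase i ⊆ S then (1:ℝ) else 0)
        - ((k:ℝ)-2)/((k:ℝ)-1) *
          (((Finset.univ.filter
              (fun Q : Finset (Fin n) => Q.card = 2 ∧ i ∈ Q ∧ Q ⊆ R)).filter
                (· ⊆ S)).card : ℝ) := by
  have hk2 : (2:ℝ) ≤ (k:ℝ) := by exact_mod_cast hk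
  have hk1 : ((k:ℝ) - 1) ≠ 0 := by linarith
  rw [Finset.filter_filter, Finset.filter_filter]
  by_cases hiS : i ∈ S
  · -- i ∈ S
    have eA : Finset.univ.filter
          (fun Q : Finset (Fin n) => (Q.card = 2 ∧ Q ∩ R = {i}) ∧ Q ⊆ S)
        = Finset.univ.filter
          (fun Q : Finset (Fin n) => Q.card = 2 ∧ i ∈ Q ∧ Q.erase i ⊆ S \ R) := by
      ext Q
      simp only [mem_filter, mem_univ, true_and]
      constructor
      · rintro ⟨⟨hc, hQR⟩, hQS⟩
        have hiQ : i ∈ Q := by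
          have : i ∈ Q ∩ R := hQR ▸ Finset.mem_singleton_self i
          exact (Finset.mem_inter.mp this).1
        refine ⟨hc, hiQ, fun x hx => ?_⟩
        have hxQ := Finset.mem_of_mem_erase hx
        have hxi := Finset.ne_of_mem_erase hx
        refine Finset.mem_sdiff.mpr ⟨hQS hxQ, fun hxR => ?_⟩
        exact hxi (Finset.mem_singleton.mp (hQR ▸ Finset.mem_inter.mpr ⟨hxQ, hxR⟩))
      · rintro ⟨hc, hiQ, hsub⟩
        have hQS : Q ⊆ S := by
          intro x hx
          by_cases hxi : x = i
          · exact hxi ▸ hiS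
          · exact (Finset.mem_sdiff.mp (hsub (Finset.mem_erase.mpr ⟨hxi, hx⟩))).1
        refine ⟨⟨hc, ?_⟩, hQS⟩
        ext x
        simp only [Finset.mem_inter, Finset.mem_singleton]
        constructor
        · rintro ⟨hxQ, hxR⟩
          by_contra hxi
          exact (Finset.mem_sdiff.mp (hsub (Finset.mem_erase.mpr ⟨hxi, hxQ⟩))).2 hxR
        · rintro rfl; exact ⟨hiQ, hiR⟩
    have eC : Finset.univ.filter
          (fun Q : Finset (Fin n) => (Q.card = 2 ∧ i ∈ Q ∧ Q ⊆ R) ∧ Q ⊆ S)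
        = Finset.univ.filter
          (fun Q : Finset (Fin n) => Q.card = 2 ∧ i ∈ Q ∧ Q.erase i ⊆ (S ∩ R).erase i) := by
      ext Q
      simp only [mem_filter, mem_univ, true_and]
      constructor
      · rintro ⟨⟨hc, hiQ, hQR⟩, hQS⟩
        refine ⟨hc, hiQ, fun x hx => ?_⟩
        have hxQ := Finset.mem_of_mem_erase hx
        exact Finset.mem_erase.mpr ⟨Finset.ne_of_mem_erase hx,
          Finset.mem_inter.mpr ⟨hQS hxQ, hQR hxQ⟩⟩
      · rintro ⟨hc, hiQ, hsub⟩
        refine ⟨⟨hc, hiQ, fun x hx => ?_⟩, fun x hx => ?_⟩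
        · by_cases hxi : x = i
          · exact hxi ▸ hiR
          · exact (Finset.mem_inter.mp
              (Finset.mem_of_mem_erase (hsub (Finset.mem_erase.mpr ⟨hxi, hx⟩)))).2
        · by_cases hxi : x = i
          · exact hxi ▸ hiS
          · exact (Finset.mem_inter.mp
              (Finset.mem_of_mem_erase (hsub (Finset.mem_erase.mpr ⟨hxi, hx⟩)))).1
    have hiSR : i ∈ S ∩ R := Finset.mem_inter.mpr ⟨hiS, hiR⟩
    have hcA : (Finset.univ.filter
          (fun Q : Finset (Fin n) => (Q.card = 2 ∧ Q ∩ R = {i}) ∧ Q ⊆ S)).card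
        = (S \ R).card := by
      rw [eA]; exact pair_count i (S \ R) (fun h => (Finset.mem_sdiff.mp h).2 hiR)
    have hcC : (Finset.univ.filter
          (fun Q : Finset (Fin n) => (Q.card = 2 ∧ i ∈ Q ∧ Q ⊆ R) ∧ Q ⊆ S)).card
        = (S ∩ R).card - 1 := by
      rw [eC, pair_count i ((S ∩ R).erase i) (Finset.notMem_erase i _),
        Finset.card_erase_of_mem hiSR]
    set t := (S ∩ R).card with ht
    have ht1 : 1 ≤ t := Finset.card_pos.mpr ⟨i, hiSR⟩
    have ht3 : t ≤ 3 := hR ▸ Finset.card_le_card Finset.inter_subset_right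
    have htk : t + (S \ R).card = k := by
      rw [ht, Finset.card_inter_add_card_sdiff, hS]
    have hRS : R ∩ S = S ∩ R := Finset.inter_comm R S
    -- conditions
    have h1 : (R ∩ S = {i}) ↔ t = 1 := by
      constructor
      · intro h; rw [ht, ← hRS, h, Finset.card_singleton]
      · intro h
        have hsub : ({i} : Finset (Fin n)) ⊆ R ∩ S :=
          Finset.singleton_subset_iff.mpr (Finset.mem_inter.mpr ⟨hiR, hiS⟩)
        exact (Finset.eq_of_subset_of_card_le hsub
          (by rw [hRS, ← ht, h, Finset.card_singleton])).symm
    have h2 : (R.erase i ⊆ S) ↔ t = 3 := by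
      constructor
      · intro h
        have hRsub : R ⊆ S := by
          intro x hx
          by_cases hxi : x = i
          · exact hxi ▸ hiS
          · exact h (Finset.mem_erase.mpr ⟨hxi, hx⟩)
        have hSR : S ∩ R = R := by
          apply Finset.eq_of_subset_of_card_le Finset.inter_subset_right
          rw [← hRS, Finset.inter_eq_left.mpr hRsub]
        rw [ht, hSR, hR]
      · intro h
        have : S ∩ R = R := Finset.eq_of_subset_of_card_le
          Finset.inter_subset_right (by rw [hR, ← ht, h])
        intro x hx
        have hxR := Finset.mem_of_mem_erase hx
        have hx2 : x ∈ S ∩ R := by rw [this]; exact hxR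
        exact (Finset.mem_inter.mp hx2).1
    have h3 : ¬ (R \ S = {i}) := by
      intro h
      have : i ∈ R \ S := h ▸ Finset.mem_singleton_self i
      exact (Finset.mem_sdiff.mp this).2 hiS
    rw [hcA, hcC]
    have hsd : ((S \ R).card : ℝ) = (k : ℝ) - t := by
      have := htk
      push_cast [← this]
      ring
    have hcC' : ((t - 1 : ℕ) : ℝ) = (t : ℝ) - 1 := by
      push_cast [Nat.cast_sub ht1]; ring
    rw [hsd, hcC']
    interval_cases t
    · -- t = 1
      rw [if_pos (Or.inl (h1.mpr rfl)), if_neg (by rw [h2]; omega)]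
      push_cast
      field_simp
      ring
    · -- t = 2
      rw [if_neg (by simp only [h1]; push_neg; exact ⟨by omega, h3⟩),
        if_neg (by rw [h2]; omega)]
      push_cast
      field_simp
      ring
    · -- t = 3
      rw [if_neg (by simp only [h1]; push_neg; exact ⟨by omega, h3⟩),
        if_pos (h2.mpr rfl)]
      push_cast
      field_simp
      ring
  · -- i ∉ S
    have hA : (Finset.univ.filter
          (fun Q : Finset (Fin n) => (Q.card = 2 ∧ Q ∩ R = {i}) ∧ Q ⊆ S)).card = 0 := by
      rw [Finset.card_eq_zero, Finset.filter_eq_empty_iff]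
      rintro Q - ⟨⟨hc, hQR⟩, hQS⟩
      have : i ∈ Q ∩ R := hQR ▸ Finset.mem_singleton_self i
      exact hiS (hQS (Finset.mem_inter.mp this).1)
    have hC : (Finset.univ.filter
          (fun Q : Finset (Fin n) => (Q.card = 2 ∧ i ∈ Q ∧ Q ⊆ R) ∧ Q ⊆ S)).card = 0 := by
      rw [Finset.card_eq_zero, Finset.filter_eq_empty_iff]
      rintro Q - ⟨⟨hc, hiQ, hQR⟩, hQS⟩
      exact hiS (hQS hiQ)
    have h1 : ¬ (R ∩ S = {i}) := by
      intro h
      have : i ∈ R ∩ S := h ▸ Finset.mem_singleton_self i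
      exact hiS (Finset.mem_inter.mp this).2
    have h2 : (R \ S = {i}) ↔ (R.erase i ⊆ S) := by
      constructor
      · intro h x hx
        by_contra hxS
        have : x ∈ R \ S := Finset.mem_sdiff.mpr ⟨Finset.mem_of_mem_erase hx, hxS⟩
        exact Finset.ne_of_mem_erase hx (Finset.mem_singleton.mp (h ▸ this))
      · intro h
        ext x
        simp only [Finset.mem_sdiff, Finset.mem_singleton]
        constructor
        · rintro ⟨hxR, hxS⟩
          by_contra hxi
          exact hxS (h (Finset.mem_erase.mpr ⟨hxi, hxR⟩))
        · rintro rfl; exact ⟨hiR, hiS⟩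
    rw [hA, hC]
    simp only [Nat.cast_zero, mul_zero, sub_zero, add_zero]
    by_cases hc : R.erase i ⊆ S
    · rw [if_pos (Or.inr (h2.mpr hc)), if_pos hc]; ring
    · rw [if_neg (by push_neg; exact ⟨h1, fun h => hc (h2.mp h)⟩), if_neg hc]; ring

theorem triple_singleton_identity (n : ℕ) (x : Finset (Fin n) → ℝ)
    (i : Fin n) (R : Finset (Fin n)) (hR : R.card = 3) (hiR : i ∈ R)
    (k : ℕ) (hk : 2 ≤ k) (hkn : k ≤ n) :
    (∑ S ∈ Finset.univ.filter
        (fun S : Finset (Fin n) => S.card = k ∧ (R ∩ S = {i} ∨ R \ S = {i})), x S)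
      = (1 / ((k : ℝ) - 1)) *
          (∑ Q ∈ Finset.univ.filter
              (fun Q : Finset (Fin n) => Q.card = 2 ∧ Q ∩ R = {i}), yQ n k Q x)
        + yQ n k (R.erase i) x
        - (((k : ℝ) - 2) / ((k : ℝ) - 1)) *
          (∑ Q ∈ Finset.univ.filter
              (fun Q : Finset (Fin n) => Q.card = 2 ∧ i ∈ Q ∧ Q ⊆ R), yQ n k Q x) := by
  rw [sum_yQ, sum_yQ, yQ_eq, ← Finset.filter_filter, Finset.sum_filter,
    Finset.mul_sum, Finset.mul_sum, ← Finset.sum_add_distrib, ← Finset.sum_sub_distrib]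
  refine Finset.sum_congr rfl fun S hS => ?_
  have hSk : S.card = k := (Finset.mem_filter.mp hS).2
  have hcoef := coef_eq i R S hR hiR k hk hSk
  have : (if R ∩ S = {i} ∨ R \ S = {i} then x S else 0)
      = (if R ∩ S = {i} ∨ R \ S = {i} then (1:ℝ) else 0) * x S := by
    split <;> ring
  rw [this, hcoef]
  ring
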